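/- arXiv:2307.07967 — 2 statements merged into one kernel-verified Lean document; each statement's English description precedes it below -/
import Mathlib

section
/- Let λ ∈ ℂ∖{0,1,−1} and n ≥ 1, and let A = J(λ,n) ⊕ J(λ⁻¹,n) ∈ GL(2n,ℂ) (block diagonal). Then the set {g ∈ GL(2n,ℂ) : gAg⁻¹ = A⁻¹} equals the set of 2×2 block matrices of the form [[0, Toep_n(x)·Ω(λ,n)], [Toep_n(y)·Ω(λ⁻¹,n), 0]] where x = (x₁,…,x_n), y = (y₁,…,y_n) ∈ ℂⁿ with x₁ ≠ 0 and y₁ ≠ 0, Toep_n(x) is the upper triangular Toeplitz matrix with (i,j) entry x_{j−i+1} for i ≤ j and 0 otherwise, and Ω(λ,n) is the n×n matrix with entries 0 below the diagonal, 0 in column n except the (n,n) entry which is 1, diagonal entry (−1)^{n−i} λ^{−2(n−i)}, and (−1)^{n−i} C(n−i−1, j−i) λ^{−2n+i+j} at (i,j) for i < j, j ≠ n. -/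
/-- The Jordan block `J(λ, m)`. -/
noncomputable def jordanBlock (lam : ℂ) (m : ℕ) : Matrix (Fin m) (Fin m) ℂ :=
  Matrix.of fun i j => if (j : ℕ) = (i : ℕ) then lam
    else if (j : ℕ) = (i : ℕ) + 1 then 1 else 0

/-- The matrix `Ω(λ, n)` (indices `1, …, n` in the paper correspond to `0, …, n-1` here). -/
noncomputable def Omega (lam : ℂ) (n : ℕ) : Matrix (Fin n) (Fin n) ℂ :=
  Matrix.of fun i j =>
    if (j : ℕ) < (i : ℕ) then 0
    else if i = j then (-1 : ℂ) ^ (n - 1 - (i : ℕ)) * lam ^ (-(2 * ((n : ℤ) - 1 - (i : ℕ))))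
    else if (j : ℕ) = n - 1 then 0
    else (-1 : ℂ) ^ (n - 1 - (i : ℕ)) * ((n - 2 - (i : ℕ)).choose ((j : ℕ) - (i : ℕ))) *
      lam ^ ((i : ℤ) + (j : ℕ) + 2 - 2 * n)

/-- The upper triangular Toeplitz matrix determined by `x`. -/
noncomputable def toep {n : ℕ} (x : Fin n → ℂ) : Matrix (Fin n) (Fin n) ℂ :=
  Matrix.of fun i j =>
    if (i : ℕ) ≤ (j : ℕ) then
      x ⟨(j : ℕ) - (i : ℕ), lt_of_le_of_lt (Nat.sub_le _ _) j.isLt⟩ else 0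

noncomputable def shiftM (n : ℕ) : Matrix (Fin n) (Fin n) ℂ :=
  Matrix.of fun i j => if (j : ℕ) = (i : ℕ) + 1 then 1 else 0

lemma jordan_decomp (lam : ℂ) (n : ℕ) :
    jordanBlock lam n = lam • (1 : Matrix (Fin n) (Fin n) ℂ) + shiftM n := by
  ext i j
  simp only [jordanBlock, shiftM, Matrix.of_apply, Matrix.add_apply, Matrix.smul_apply,
    Matrix.one_apply, smul_eq_mul]
  rcases eq_or_ne (j : ℕ) (i : ℕ) with h | h
  · have hij : i = j := Fin.ext (by omega)
    simp [h, hij.symm, (by omega : ¬ (j:ℕ) = (i:ℕ)+1)]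
  · have : ¬ i = j := fun e => h (by rw [e])
    simp [h, this]

lemma mul_shift_apply {n : ℕ} (M : Matrix (Fin n) (Fin n) ℂ) (i j : Fin n) :
    (M * shiftM n) i j = if h : 1 ≤ (j : ℕ) then
      M i ⟨(j : ℕ) - 1, lt_of_le_of_lt (Nat.sub_le _ _) j.isLt⟩ else 0 := by
  rw [Matrix.mul_apply]
  split
  · next h =>
    rw [Finset.sum_eq_single (⟨(j : ℕ) - 1, lt_of_le_of_lt (Nat.sub_le _ _) j.isLt⟩ : Fin n)]
    · simp [shiftM]; omega
    · intro k _ hk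
      have : ¬ (j : ℕ) = (k : ℕ) + 1 := by
        intro e; apply hk; apply Fin.ext; simp; omega
      simp [shiftM, this]
    · simp
  · next h =>
    apply Finset.sum_eq_zero
    intro k _
    have : ¬ (j : ℕ) = (k : ℕ) + 1 := by omega
    simp [shiftM, this]

lemma shift_mul_apply {n : ℕ} (M : Matrix (Fin n) (Fin n) ℂ) (i j : Fin n) :
    (shiftM n * M) i j = if h : (i : ℕ) + 1 < n then M ⟨(i : ℕ) + 1, h⟩ j else 0 := by
  rw [Matrix.mul_apply]
  split
  · next h =>
    rw [Finset.sum_eq_single (⟨(i : ℕ) + 1, h⟩ : Fin n)]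
    · simp [shiftM]
    · intro k _ hk
      have : ¬ (k : ℕ) = (i : ℕ) + 1 := by
        intro e; apply hk; exact Fin.ext (by simpa using e)
      simp [shiftM, this]
    · simp
  · next h =>
    apply Finset.sum_eq_zero
    intro k _
    have : ¬ (k : ℕ) = (i : ℕ) + 1 := by omega
    simp [shiftM, this]

lemma mul_jordan_apply {n : ℕ} (lam : ℂ) (M : Matrix (Fin n) (Fin n) ℂ) (i j : Fin n) :
    (M * jordanBlock lam n) i j = lam * M i j + (if h : 1 ≤ (j : ℕ) then
      M i ⟨(j : ℕ) - 1, lt_of_le_of_lt (Nat.sub_le _ _) j.isLt⟩ else 0) := by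
  rw [jordan_decomp, Matrix.mul_add, Matrix.add_apply, mul_shift_apply]
  congr 1
  simp [Matrix.mul_smul, Matrix.smul_apply]

lemma jordan_mul_apply {n : ℕ} (lam : ℂ) (M : Matrix (Fin n) (Fin n) ℂ) (i j : Fin n) :
    (jordanBlock lam n * M) i j = lam * M i j + (if h : (i : ℕ) + 1 < n then
      M ⟨(i : ℕ) + 1, h⟩ j else 0) := by
  rw [jordan_decomp, Matrix.add_mul, Matrix.add_apply, shift_mul_apply]
  congr 1
  simp [Matrix.smul_mul, Matrix.smul_apply]


lemma shift_pow_apply {n : ℕ} (k : ℕ) (i j : Fin n) :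
    ((shiftM n) ^ k) i j = if (j : ℕ) = (i : ℕ) + k then 1 else 0 := by
  induction k generalizing i j with
  | zero => simp [Matrix.one_apply, Fin.ext_iff, eq_comm]
  | succ k ih =>
    rw [pow_succ, mul_shift_apply]
    split
    · next h =>
      rw [ih]
      simp only [Fin.val_mk]
      split <;> split <;> first | rfl | (exfalso; omega)
    · next h =>
      have : ¬ (j : ℕ) = (i : ℕ) + (k + 1) := by omega
      simp [this]

lemma shift_pow_n {n : ℕ} : (shiftM n) ^ n = 0 := by
  ext i j
  rw [shift_pow_apply]
  have : ¬ (j : ℕ) = (i : ℕ) + n := by omega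
  simp [this]

lemma jordan_bt (lam : ℂ) (n : ℕ) : (jordanBlock lam n).BlockTriangular id := by
  intro i j h
  have h' : (j : ℕ) < (i : ℕ) := h
  show (Matrix.of _ : Matrix (Fin n) (Fin n) ℂ) i j = 0
  rw [Matrix.of_apply, if_neg (by omega), if_neg (by omega)]

lemma det_jordan (lam : ℂ) (n : ℕ) : (jordanBlock lam n).det = lam ^ n := by
  rw [Matrix.det_of_upperTriangular (jordan_bt lam n)]
  simp [jordanBlock]

lemma isUnit_jordan {lam : ℂ} (h : lam ≠ 0) (n : ℕ) : IsUnit (jordanBlock lam n) := by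
  rw [Matrix.isUnit_iff_isUnit_det, det_jordan]
  exact (isUnit_iff_ne_zero.2 (pow_ne_zero _ h))

lemma toep_bt {n : ℕ} (x : Fin n → ℂ) : (toep x).BlockTriangular id := by
  intro i j h
  have h' : (j : ℕ) < (i : ℕ) := h
  show (Matrix.of _ : Matrix (Fin n) (Fin n) ℂ) i j = 0
  rw [Matrix.of_apply, if_neg (by omega)]

lemma det_toep {n : ℕ} (hn : 0 < n) (x : Fin n → ℂ) :
    (toep x).det = (x ⟨0, hn⟩) ^ n := by
  rw [Matrix.det_of_upperTriangular (toep_bt x)]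
  have : ∀ i : Fin n, toep x i i = x ⟨0, hn⟩ := by
    intro i
    simp only [toep, Matrix.of_apply, le_refl, if_true]
    congr 1
    exact Fin.ext (by simp)
  simp [this]

lemma omega_bt (lam : ℂ) (n : ℕ) : (Omega lam n).BlockTriangular id := by
  intro i j h
  have h' : (j : ℕ) < (i : ℕ) := h
  show (Matrix.of _ : Matrix (Fin n) (Fin n) ℂ) i j = 0
  rw [Matrix.of_apply, if_pos h']

lemma omega_diag {lam : ℂ} (hlam : lam ≠ 0) {n : ℕ} (i : Fin n) :
    Omega lam n i i = (-1 : ℂ) ^ (n - 1 - (i : ℕ)) * lam ^ (-(2 * ((n : ℤ) - 1 - (i : ℕ)))) := by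
  simp [Omega]

lemma isUnit_omega {lam : ℂ} (hlam : lam ≠ 0) (n : ℕ) : IsUnit (Omega lam n) := by
  rw [Matrix.isUnit_iff_isUnit_det, Matrix.det_of_upperTriangular (omega_bt lam n),
    isUnit_iff_ne_zero]
  apply Finset.prod_ne_zero_iff.2
  intro i _
  rw [omega_diag hlam]
  exact mul_ne_zero (pow_ne_zero _ (by norm_num)) (zpow_ne_zero _ hlam)

lemma toep_apply {n : ℕ} (x : Fin n → ℂ) (i j : Fin n) :
    toep x i j = if h : (i : ℕ) ≤ (j : ℕ) then
      x ⟨(j : ℕ) - (i : ℕ), lt_of_le_of_lt (Nat.sub_le _ _) j.isLt⟩ else 0 := by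
  simp only [toep, Matrix.of_apply]
  split <;> simp_all

lemma toep_comm_jordan {n : ℕ} (lam : ℂ) (x : Fin n → ℂ) :
    toep x * jordanBlock lam n = jordanBlock lam n * toep x := by
  ext i j
  rw [mul_jordan_apply, jordan_mul_apply]
  congr 1
  rcases Nat.lt_or_ge (j : ℕ) 1 with hj | hj
  · rw [dif_neg (by omega)]
    rcases Nat.lt_or_ge ((i : ℕ) + 1) n with hi | hi
    · rw [dif_pos hi, toep_apply, dif_neg (by simp; omega)]
    · rw [dif_neg (by omega)]
  · rw [dif_pos hj]
    rcases Nat.lt_or_ge ((i : ℕ) + 1) n with hi | hi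
    · rw [dif_pos hi, toep_apply, toep_apply]
      simp only [Fin.val_mk]
      rcases Nat.lt_or_ge (j : ℕ) ((i : ℕ) + 1) with hij | hij
      · rw [dif_neg (by omega), dif_neg (by omega)]
      · rw [dif_pos (by omega), dif_pos (by omega)]
        congr 1
        exact Fin.ext (by simp; omega)
    · rw [dif_neg (by omega), toep_apply, dif_neg (by simp; omega)]

lemma comm_jordan_eq_toep {n : ℕ} (hn : 0 < n) {lam : ℂ} {K : Matrix (Fin n) (Fin n) ℂ}
    (hK : K * jordanBlock lam n = jordanBlock lam n * K) :
    K = toep (fun d => K ⟨0, hn⟩ d) := by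
  have key : ∀ i j : Fin n, (if h : 1 ≤ (j : ℕ) then
      K i ⟨(j : ℕ) - 1, lt_of_le_of_lt (Nat.sub_le _ _) j.isLt⟩ else 0)
      = (if h : (i : ℕ) + 1 < n then K ⟨(i : ℕ) + 1, h⟩ j else 0) := by
    intro i j
    have := congrFun (congrFun hK i) j
    rw [mul_jordan_apply, jordan_mul_apply] at this
    exact add_left_cancel this
  have main : ∀ m : ℕ, ∀ i j : Fin n, (i : ℕ) = m →
      K i j = toep (fun d => K ⟨0, hn⟩ d) i j := by
    intro m
    induction m with
    | zero =>
      intro i j hi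
      rw [toep_apply, dif_pos (by omega)]
      congr 1
      · exact Fin.ext hi
      · exact Fin.ext (by simp; omega)
    | succ m ih =>
      intro i j hi
      have hm : m < n := by omega
      have hmm : m + 1 < n := by omega
      have hkey := key ⟨m, hm⟩ j
      rw [dif_pos (show ((⟨m, hm⟩ : Fin n) : ℕ) + 1 < n from hmm)] at hkey
      rw [show i = ⟨m + 1, hmm⟩ from Fin.ext hi, ← hkey]
      rcases Nat.lt_or_ge (j : ℕ) 1 with hj | hj
      · rw [dif_neg (by omega), toep_apply, dif_neg (by simp; omega)]
      · rw [dif_pos hj,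
          ih ⟨m, hm⟩ ⟨(j : ℕ) - 1, lt_of_le_of_lt (Nat.sub_le _ _) j.isLt⟩ rfl,
          toep_apply, toep_apply]
        simp only [Fin.val_mk]
        by_cases hc : m + 1 ≤ (j : ℕ)
        · rw [dif_pos (by omega), dif_pos (by omega)]
          congr 1
          exact Fin.ext (by simp; omega)
        · rw [dif_neg (by omega), dif_neg (by omega)]
  ext i j
  exact main (i : ℕ) i j rfl

lemma jordan_conj_zero {n : ℕ} {lam : ℂ} (h0 : lam ≠ 0) (hsq : lam * lam ≠ 1)
    {a : Matrix (Fin n) (Fin n) ℂ}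
    (h : jordanBlock lam n * a * jordanBlock lam n = a) : a = 0 := by
  set J := jordanBlock lam n with hJdef
  have hJ : IsUnit J := isUnit_jordan h0 n
  have hJdet : IsUnit J.det := (Matrix.isUnit_iff_isUnit_det J).1 hJ
  set B := J⁻¹ with hBdef
  have hBJ : B * J = 1 := Matrix.nonsing_inv_mul J hJdet
  have hJB : J * B = 1 := Matrix.mul_nonsing_inv J hJdet
  have hstep : a * B = J * a := by
    have : (J * a * J) * B = a * B := by rw [h]
    rw [Matrix.mul_assoc, hJB, Matrix.mul_one] at this
    exact this.symm
  have hstep' : a * (B - lam • 1) = (J - lam • 1) * a := by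
    rw [Matrix.mul_sub, Matrix.sub_mul, hstep]
    congr 1
    rw [Matrix.mul_smul, Matrix.smul_mul, Matrix.mul_one, Matrix.one_mul]
  have hind : ∀ k : ℕ, a * (B - lam • 1) ^ k = (J - lam • 1) ^ k * a := by
    intro k
    induction k with
    | zero => simp
    | succ k ih =>
      rw [pow_succ', pow_succ', ← Matrix.mul_assoc, hstep', Matrix.mul_assoc, ih,
        ← Matrix.mul_assoc]
  have hnil : (J - lam • 1) ^ n = 0 := by
    have : J - lam • 1 = shiftM n := by
      rw [hJdef, jordan_decomp]; abel
    rw [this, shift_pow_n]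
  have hzero : a * (B - lam • 1) ^ n = 0 := by rw [hind, hnil, Matrix.zero_mul]
  -- B - lam • 1 = B * (1 - lam • J)
  have hfact : B - lam • 1 = B * (1 - lam • J) := by
    rw [Matrix.mul_sub, Matrix.mul_one, Matrix.mul_smul, hBJ]
  have hBunit : IsUnit B := ⟨⟨B, J, hBJ, hJB⟩, rfl⟩
  have h1bt : (1 - lam • J : Matrix (Fin n) (Fin n) ℂ).BlockTriangular id := by
    intro i j hij
    have h' : (j : ℕ) < (i : ℕ) := hij
    have h1 : (1 : Matrix (Fin n) (Fin n) ℂ) i j = 0 := by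
      rw [Matrix.one_apply, if_neg (fun e => by omega : ¬ i = j)]
    have h2 : J i j = 0 := jordan_bt lam n h'
    simp [Matrix.sub_apply, Matrix.smul_apply, h1, h2]
  have h1unit : IsUnit (1 - lam • J : Matrix (Fin n) (Fin n) ℂ) := by
    rw [Matrix.isUnit_iff_isUnit_det, Matrix.det_of_upperTriangular h1bt,
      isUnit_iff_ne_zero]
    have hd : ∀ i : Fin n, (1 - lam • J : Matrix (Fin n) (Fin n) ℂ) i i = 1 - lam * lam := by
      intro i
      have : J i i = lam := by simp [hJdef, jordanBlock]
      simp [Matrix.sub_apply, Matrix.smul_apply, this, Matrix.one_apply]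
    rw [Finset.prod_congr rfl (fun i _ => hd i)]
    simp only [Finset.prod_const]
    exact pow_ne_zero _ (sub_ne_zero.2 (fun e => hsq e.symm))
  have hU : IsUnit ((B - lam • 1) ^ n) := by
    rw [hfact]; exact (hBunit.mul h1unit).pow n
  obtain ⟨u, hu⟩ := hU
  calc a = a * (B - lam • 1) ^ n * (↑u⁻¹ : Matrix (Fin n) (Fin n) ℂ) := by
        rw [← hu, Matrix.mul_assoc, u.mul_inv, Matrix.mul_one]
    _ = 0 := by rw [hzero, Matrix.zero_mul]

lemma Omega_below {μ : ℂ} {n : ℕ} (i j : Fin n) (h : (j : ℕ) < (i : ℕ)) :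
    Omega μ n i j = 0 := by
  show (Matrix.of _ : Matrix (Fin n) (Fin n) ℂ) i j = 0
  rw [Matrix.of_apply, if_pos h]

lemma Omega_lastcol {μ : ℂ} {n : ℕ} (i j : Fin n) (hij : (i : ℕ) < (j : ℕ))
    (hj : (j : ℕ) = n - 1) : Omega μ n i j = 0 := by
  show (Matrix.of _ : Matrix (Fin n) (Fin n) ℂ) i j = 0
  rw [Matrix.of_apply, if_neg (by omega), if_neg (fun e => by rw [e] at hij; omega),
    if_pos hj]

lemma Omega_lastdiag {μ : ℂ} {n : ℕ} (i j : Fin n) (hi : (i : ℕ) = n - 1)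
    (hj : (j : ℕ) = n - 1) : Omega μ n i j = 1 := by
  have hn : 0 < n := i.pos
  have hij : i = j := Fin.ext (by omega)
  show (Matrix.of _ : Matrix (Fin n) (Fin n) ℂ) i j = 1
  rw [Matrix.of_apply, if_neg (by omega), if_pos hij]
  rw [show n - 1 - (i : ℕ) = 0 from by omega]
  rw [show (-(2 * ((n : ℤ) - 1 - (i : ℕ)))) = 0 from by omega]
  simp

lemma Omega_apply' {μ : ℂ} {n : ℕ} (i j : Fin n) (hij : (i : ℕ) ≤ (j : ℕ))
    (hjn : (j : ℕ) + 2 ≤ n) :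
    Omega μ n i j = (-1 : ℂ) ^ (n - 1 - (i : ℕ)) *
      ((n - 2 - (i : ℕ)).choose ((j : ℕ) - (i : ℕ))) *
      μ ^ (((i : ℕ) : ℤ) + ((j : ℕ) : ℤ) + 2 - 2 * (n : ℤ)) := by
  show (Matrix.of _ : Matrix (Fin n) (Fin n) ℂ) i j = _
  rw [Matrix.of_apply, if_neg (by omega)]
  rcases eq_or_ne i j with he | he
  · have h2 : (i : ℕ) = (j : ℕ) := by rw [he]
    have h3 : (-(2 * ((n : ℤ) - 1 - (i : ℕ)))) =
        ((i : ℕ) : ℤ) + ((j : ℕ) : ℤ) + 2 - 2 * (n : ℤ) := by omega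
    rw [if_pos he, h3, show ((j : ℕ) - (i : ℕ)) = 0 from by omega, Nat.choose_zero_right,
      Nat.cast_one, mul_one]
  · rw [if_neg he, if_neg (show ¬ (j : ℕ) = n - 1 from by omega)]

lemma intertwine {n : ℕ} (μ : ℂ) (h0 : μ ≠ 0) :
    jordanBlock μ n * Omega μ n * jordanBlock μ⁻¹ n = Omega μ n := by
  ext i j
  rw [mul_jordan_apply]
  simp only [jordan_mul_apply]
  rcases i with ⟨I, hI⟩
  rcases j with ⟨Jv, hJv⟩
  simp only [Fin.val_mk]
  by_cases hin : I + 1 < n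
  · simp only [dif_pos hin]
    by_cases hj1 : 1 ≤ Jv
    · rw [dif_pos hj1]
      by_cases hji : Jv ≤ I
      · -- all shifted entries below the diagonal
        rw [Omega_below ⟨I + 1, hin⟩ ⟨Jv, hJv⟩ (by simp only [Fin.val_mk]; omega),
          Omega_below ⟨I, hI⟩ ⟨Jv - 1, _⟩ (by simp only [Fin.val_mk]; omega),
          Omega_below ⟨I + 1, hin⟩ ⟨Jv - 1, _⟩ (by simp only [Fin.val_mk]; omega)]
        simp [inv_mul_cancel_left₀ h0]
      · push_neg at hji
        by_cases hlast : Jv + 2 ≤ n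
        · -- generic column
          by_cases hd : Jv = I + 1
          · -- one step above the diagonal
            subst hd
            obtain ⟨p, hp⟩ : ∃ p, n = I + p + 3 := ⟨n - (I + 3), by omega⟩
            subst hp
            simp only [show I + 1 - 1 = I from rfl]
            rw [Omega_below ⟨I + 1, hin⟩ ⟨I, by omega⟩ (by simp only [Fin.val_mk]; omega),
              Omega_apply' ⟨I, hI⟩ ⟨I + 1, hJv⟩ (by simp only [Fin.val_mk]; omega) (by simp only [Fin.val_mk]; omega),
              Omega_apply' ⟨I + 1, hin⟩ ⟨I + 1, hJv⟩ (by simp only [Fin.val_mk]; omega) (by simp only [Fin.val_mk]; omega),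
              Omega_apply' ⟨I, hI⟩ ⟨I, by omega⟩ (by simp only [Fin.val_mk]; omega) (by simp only [Fin.val_mk]; omega)]
            simp only [Fin.val_mk]
            simp only [show I + p + 3 - 1 - I = p + 2 from by omega,
              show I + p + 3 - 2 - I = p + 1 from by omega,
              show I + p + 3 - 1 - (I + 1) = p + 1 from by omega,
              show I + p + 3 - 2 - (I + 1) = p from by omega,
              show I + 1 - I = 1 from by omega,
              show I + 1 - (I + 1) = 0 from by omega,
              show I - I = 0 from by omega,
              Nat.choose_zero_right, Nat.choose_one_right, Nat.choose_self]
            rw [show ((I + 1 : ℕ) : ℤ) + ((I + 1 : ℕ) : ℤ) + 2 - 2 * ((I + p + 3 : ℕ) : ℤ)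
                = (((I : ℕ) : ℤ) + ((I + 1 : ℕ) : ℤ) + 2 - 2 * ((I + p + 3 : ℕ) : ℤ)) + 1
                from by push_cast; ring,
              show ((I : ℕ) : ℤ) + ((I : ℕ) : ℤ) + 2 - 2 * ((I + p + 3 : ℕ) : ℤ)
                = (((I : ℕ) : ℤ) + ((I + 1 : ℕ) : ℤ) + 2 - 2 * ((I + p + 3 : ℕ) : ℤ)) - 1
                from by push_cast; ring,
              zpow_add_one₀ h0, zpow_sub_one₀ h0]
            push_cast
            field_simp
            ring
          · -- at least two above the diagonal: Pascal's rule
            obtain ⟨k, hk⟩ : ∃ k, Jv = I + k + 2 := ⟨Jv - (I + 2), by omega⟩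
            subst hk
            obtain ⟨q, hq⟩ : ∃ q, n = I + k + q + 4 := ⟨n - (I + k + 4), by omega⟩
            subst hq
            simp only [show I + k + 2 - 1 = I + k + 1 from rfl]
            rw [Omega_apply' ⟨I, hI⟩ ⟨I + k + 2, hJv⟩ (by simp only [Fin.val_mk]; omega) (by simp only [Fin.val_mk]; omega),
              Omega_apply' ⟨I + 1, hin⟩ ⟨I + k + 2, hJv⟩ (by simp only [Fin.val_mk]; omega) (by simp only [Fin.val_mk]; omega),
              Omega_apply' ⟨I, hI⟩ ⟨I + k + 1, by omega⟩ (by simp only [Fin.val_mk]; omega) (by simp only [Fin.val_mk]; omega),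
              Omega_apply' ⟨I + 1, hin⟩ ⟨I + k + 1, by omega⟩ (by simp only [Fin.val_mk]; omega) (by simp only [Fin.val_mk]; omega)]
            simp only [Fin.val_mk]
            simp only [show I + k + q + 4 - 1 - I = k + q + 3 from by omega,
              show I + k + q + 4 - 2 - I = k + q + 2 from by omega,
              show I + k + q + 4 - 1 - (I + 1) = k + q + 2 from by omega,
              show I + k + q + 4 - 2 - (I + 1) = k + q + 1 from by omega,
              show I + k + 2 - I = k + 2 from by omega,
              show I + k + 2 - (I + 1) = k + 1 from by omega,
              show I + k + 1 - I = k + 1 from by omega,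
              show I + k + 1 - (I + 1) = k from by omega]
            rw [show ((I + 1 : ℕ) : ℤ) + ((I + k + 2 : ℕ) : ℤ) + 2 - 2 * ((I + k + q + 4 : ℕ) : ℤ)
                = (((I : ℕ) : ℤ) + ((I + k + 2 : ℕ) : ℤ) + 2 - 2 * ((I + k + q + 4 : ℕ) : ℤ)) + 1
                from by push_cast; ring,
              show ((I : ℕ) : ℤ) + ((I + k + 1 : ℕ) : ℤ) + 2 - 2 * ((I + k + q + 4 : ℕ) : ℤ)
                = (((I : ℕ) : ℤ) + ((I + k + 2 : ℕ) : ℤ) + 2 - 2 * ((I + k + q + 4 : ℕ) : ℤ)) - 1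
                from by push_cast; ring,
              show ((I + 1 : ℕ) : ℤ) + ((I + k + 1 : ℕ) : ℤ) + 2 - 2 * ((I + k + q + 4 : ℕ) : ℤ)
                = (((I : ℕ) : ℤ) + ((I + k + 2 : ℕ) : ℤ) + 2 - 2 * ((I + k + q + 4 : ℕ) : ℤ))
                from by push_cast; ring,
              zpow_add_one₀ h0, zpow_sub_one₀ h0]
            rw [show k + q + 2 = (k + q + 1) + 1 from by omega]
            rw [Nat.choose_succ_succ (k + q + 1) k]
            push_cast
            field_simp
            ring
        · -- last column
          have hJn : Jv = n - 1 := by omega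
          by_cases hd : Jv = I + 1
          · -- the corner case
            have hn2 : n = I + 2 := by omega
            subst hn2
            have hd' : Jv = I + 1 := hd
            subst hd'
            simp only [show I + 1 - 1 = I from rfl]
            rw [Omega_lastcol ⟨I, hI⟩ ⟨I + 1, hJv⟩ (by simp only [Fin.val_mk]; omega) (by simp only [Fin.val_mk]; omega),
              Omega_lastdiag ⟨I + 1, hin⟩ ⟨I + 1, hJv⟩ (by simp only [Fin.val_mk]; omega) (by simp only [Fin.val_mk]; omega),
              Omega_below ⟨I + 1, hin⟩ ⟨I, by omega⟩ (by simp only [Fin.val_mk]; omega),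
              Omega_apply' ⟨I, hI⟩ ⟨I, by omega⟩ (by simp only [Fin.val_mk]; omega) (by simp only [Fin.val_mk]; omega)]
            simp only [Fin.val_mk]
            simp only [show I + 2 - 1 - I = 1 from by omega,
              show I + 2 - 2 - I = 0 from by omega,
              show I - I = 0 from by omega, Nat.choose_zero_right]
            rw [show ((I : ℕ) : ℤ) + ((I : ℕ) : ℤ) + 2 - 2 * ((I + 2 : ℕ) : ℤ) = -2
              from by push_cast; ring]
            rw [show ((-2 : ℤ)) = -(2 : ℕ) from by norm_num, zpow_neg, zpow_natCast]
            field_simp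
            ring
          · -- above the corner in the last column
            obtain ⟨p, hp⟩ : ∃ p, Jv = I + p + 2 := ⟨Jv - (I + 2), by omega⟩
            subst hp
            have hn' : n = I + p + 3 := by omega
            subst hn'
            simp only [show I + p + 2 - 1 = I + p + 1 from rfl]
            rw [Omega_lastcol ⟨I, hI⟩ ⟨I + p + 2, hJv⟩ (by simp only [Fin.val_mk]; omega) (by simp only [Fin.val_mk]; omega),
              Omega_lastcol ⟨I + 1, hin⟩ ⟨I + p + 2, hJv⟩ (by simp only [Fin.val_mk]; omega) (by simp only [Fin.val_mk]; omega),
              Omega_apply' ⟨I, hI⟩ ⟨I + p + 1, by omega⟩ (by simp only [Fin.val_mk]; omega) (by simp only [Fin.val_mk]; omega),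
              Omega_apply' ⟨I + 1, hin⟩ ⟨I + p + 1, by omega⟩ (by simp only [Fin.val_mk]; omega) (by simp only [Fin.val_mk]; omega)]
            simp only [Fin.val_mk]
            simp only [show I + p + 3 - 1 - I = p + 2 from by omega,
              show I + p + 3 - 2 - I = p + 1 from by omega,
              show I + p + 3 - 1 - (I + 1) = p + 1 from by omega,
              show I + p + 3 - 2 - (I + 1) = p from by omega,
              show I + p + 1 - I = p + 1 from by omega,
              show I + p + 1 - (I + 1) = p from by omega,
              Nat.choose_self]
            rw [show ((I : ℕ) : ℤ) + ((I + p + 1 : ℕ) : ℤ) + 2 - 2 * ((I + p + 3 : ℕ) : ℤ)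
                = (((I + 1 : ℕ) : ℤ) + ((I + p + 1 : ℕ) : ℤ) + 2 - 2 * ((I + p + 3 : ℕ) : ℤ)) - 1
                from by push_cast; ring,
              zpow_sub_one₀ h0]
            push_cast
            field_simp
            ring
    · rw [dif_neg hj1]
      have hJ0 : Jv = 0 := by omega
      subst hJ0
      rw [Omega_below ⟨I + 1, hin⟩ ⟨0, hJv⟩ (by simp only [Fin.val_mk]; omega)]
      simp [inv_mul_cancel_left₀ h0]
  · simp only [dif_neg hin]
    by_cases hj1 : 1 ≤ Jv
    · rw [dif_pos hj1]
      rw [Omega_below ⟨I, hI⟩ ⟨Jv - 1, _⟩ (by simp only [Fin.val_mk]; omega)]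
      simp [inv_mul_cancel_left₀ h0]
    · rw [dif_neg hj1]
      simp [inv_mul_cancel_left₀ h0]

lemma conj_block_form {n : ℕ} (hn : 0 < n) {μ : ℂ} (h0 : μ ≠ 0)
    {b : Matrix (Fin n) (Fin n) ℂ}
    (hb : jordanBlock μ n * b * jordanBlock μ⁻¹ n = b) :
    ∃ x : Fin n → ℂ, b = toep x * Omega μ n := by
  set J := jordanBlock μ n with hJdef
  set J' := jordanBlock μ⁻¹ n with hJ'def
  set Ω := Omega μ n with hΩdef
  have hJ'u : IsUnit J' := isUnit_jordan (inv_ne_zero h0) n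
  have hJ'det : IsUnit J'.det := (Matrix.isUnit_iff_isUnit_det J').1 hJ'u
  have hJ'i : J' * J'⁻¹ = 1 := Matrix.mul_nonsing_inv J' hJ'det
  have hΩu : IsUnit Ω := isUnit_omega h0 n
  have hΩdet : IsUnit Ω.det := (Matrix.isUnit_iff_isUnit_det Ω).1 hΩu
  have hΩi : Ω * Ω⁻¹ = 1 := Matrix.mul_nonsing_inv Ω hΩdet
  have hΩi' : Ω⁻¹ * Ω = 1 := Matrix.nonsing_inv_mul Ω hΩdet
  have hΩJ : J * Ω * J' = Ω := intertwine μ h0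
  have hb' : J * b = b * J'⁻¹ := by
    calc J * b = J * b * (J' * J'⁻¹) := by rw [hJ'i, mul_one]
      _ = (J * b * J') * J'⁻¹ := by rw [mul_assoc, mul_assoc, mul_assoc]
      _ = b * J'⁻¹ := by rw [hb]
  have hΩ' : J * Ω = Ω * J'⁻¹ := by
    calc J * Ω = J * Ω * (J' * J'⁻¹) := by rw [hJ'i, mul_one]
      _ = (J * Ω * J') * J'⁻¹ := by rw [mul_assoc, mul_assoc, mul_assoc]
      _ = Ω * J'⁻¹ := by rw [hΩJ]
  have hΩJ' : Ω⁻¹ * J = J'⁻¹ * Ω⁻¹ := by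
    calc Ω⁻¹ * J = Ω⁻¹ * J * (Ω * Ω⁻¹) := by rw [hΩi, mul_one]
      _ = Ω⁻¹ * (J * Ω) * Ω⁻¹ := by rw [mul_assoc, mul_assoc, mul_assoc]
      _ = Ω⁻¹ * (Ω * J'⁻¹) * Ω⁻¹ := by rw [hΩ']
      _ = (Ω⁻¹ * Ω) * (J'⁻¹ * Ω⁻¹) := by rw [mul_assoc, mul_assoc, mul_assoc]
      _ = J'⁻¹ * Ω⁻¹ := by rw [hΩi', one_mul]
  have hK : (b * Ω⁻¹) * J = J * (b * Ω⁻¹) := by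
    calc (b * Ω⁻¹) * J = b * (Ω⁻¹ * J) := by rw [mul_assoc]
      _ = b * (J'⁻¹ * Ω⁻¹) := by rw [hΩJ']
      _ = (b * J'⁻¹) * Ω⁻¹ := by rw [mul_assoc]
      _ = (J * b) * Ω⁻¹ := by rw [hb']
      _ = J * (b * Ω⁻¹) := by rw [mul_assoc]
  refine ⟨fun d => (b * Ω⁻¹) ⟨0, hn⟩ d, ?_⟩
  have := comm_jordan_eq_toep hn hK
  calc b = (b * Ω⁻¹) * Ω := by rw [mul_assoc, hΩi', mul_one]
    _ = toep (fun d => (b * Ω⁻¹) ⟨0, hn⟩ d) * Ω := by rw [← this]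

lemma conj_block_form' {n : ℕ} {μ : ℂ} (h0 : μ ≠ 0) (x : Fin n → ℂ) :
    jordanBlock μ n * (toep x * Omega μ n) * jordanBlock μ⁻¹ n = toep x * Omega μ n := by
  calc jordanBlock μ n * (toep x * Omega μ n) * jordanBlock μ⁻¹ n
      = toep x * (jordanBlock μ n * Omega μ n * jordanBlock μ⁻¹ n) := by
        rw [← mul_assoc, ← mul_assoc, ← toep_comm_jordan]
        rw [mul_assoc (toep x), mul_assoc (toep x), mul_assoc (jordanBlock μ n)]
    _ = toep x * Omega μ n := by rw [intertwine μ h0]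


/-- For `λ ∉ {0, 1, -1}` and `A = J(λ,n) ⊕ J(λ⁻¹,n)` (a block diagonal matrix of
size `2n`, realized over the index type `Fin n ⊕ Fin n`), the set of reversing elements of `A`
in `GL(2n, ℂ)` is exactly the set of block antidiagonal matrices
`[[0, Toep_n(x)·Ω(λ,n)], [Toep_n(y)·Ω(λ⁻¹,n), 0]]` with `x₁, y₁ ≠ 0`. -/
theorem reverser_set_jordan_pair {n : ℕ} (hn : 1 ≤ n) (lam : ℂ)
    (hlam0 : lam ≠ 0) (hlam1 : lam ≠ 1) (hlam2 : lam ≠ -1) :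
    {g : Matrix (Fin n ⊕ Fin n) (Fin n ⊕ Fin n) ℂ | IsUnit g ∧
        g * Matrix.fromBlocks (jordanBlock lam n) 0 0 (jordanBlock lam⁻¹ n) * g⁻¹ =
          (Matrix.fromBlocks (jordanBlock lam n) 0 0 (jordanBlock lam⁻¹ n))⁻¹} =
      {g : Matrix (Fin n ⊕ Fin n) (Fin n ⊕ Fin n) ℂ |
        ∃ x y : Fin n → ℂ, x ⟨0, hn⟩ ≠ 0 ∧ y ⟨0, hn⟩ ≠ 0 ∧
          g = Matrix.fromBlocks 0 (toep x * Omega lam n) (toep y * Omega lam⁻¹ n) 0} := by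
  have hn0 : 0 < n := hn
  have hsq : lam * lam ≠ 1 := by
    intro h
    rcases mul_self_eq_one_iff.1 h with h' | h'
    · exact hlam1 h'
    · exact hlam2 h'
  have hinv0 : lam⁻¹ ≠ 0 := inv_ne_zero hlam0
  have hsq' : lam⁻¹ * lam⁻¹ ≠ 1 := by
    intro h
    rcases mul_self_eq_one_iff.1 h with h' | h'
    · exact hlam1 (by rw [← inv_inv lam, h', inv_one])
    · exact hlam2 (by rw [← inv_inv lam, h']; norm_num)
  have hJu : IsUnit (jordanBlock lam n) := isUnit_jordan hlam0 n
  have hJ'u : IsUnit (jordanBlock lam⁻¹ n) := isUnit_jordan hinv0 n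
  have hAdet : IsUnit (Matrix.fromBlocks (jordanBlock lam n) 0 0 (jordanBlock lam⁻¹ n)).det := by
    rw [Matrix.det_fromBlocks_zero₂₁]
    exact ((Matrix.isUnit_iff_isUnit_det _).1 hJu).mul ((Matrix.isUnit_iff_isUnit_det _).1 hJ'u)
  have hAAi : Matrix.fromBlocks (jordanBlock lam n) 0 0 (jordanBlock lam⁻¹ n) *
      (Matrix.fromBlocks (jordanBlock lam n) 0 0 (jordanBlock lam⁻¹ n))⁻¹ = 1 :=
    Matrix.mul_nonsing_inv _ hAdet
  have hAiA : (Matrix.fromBlocks (jordanBlock lam n) 0 0 (jordanBlock lam⁻¹ n))⁻¹ *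
      Matrix.fromBlocks (jordanBlock lam n) 0 0 (jordanBlock lam⁻¹ n) = 1 :=
    Matrix.nonsing_inv_mul _ hAdet
  have hPP : (Matrix.fromBlocks (0 : Matrix (Fin n) (Fin n) ℂ) 1 1 0 :
      Matrix (Fin n ⊕ Fin n) (Fin n ⊕ Fin n) ℂ) *
      (Matrix.fromBlocks (0 : Matrix (Fin n) (Fin n) ℂ) 1 1 0) = 1 := by
    rw [Matrix.fromBlocks_multiply]
    simp [Matrix.fromBlocks_one]
  have hPu : IsUnit (Matrix.fromBlocks (0 : Matrix (Fin n) (Fin n) ℂ) 1 1 0) :=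
    ⟨⟨_, _, hPP, hPP⟩, rfl⟩
  have hΩu : IsUnit (Omega lam n) := isUnit_omega hlam0 n
  have hΩ'u : IsUnit (Omega lam⁻¹ n) := isUnit_omega hinv0 n
  have hΩdet : (Omega lam n).det ≠ 0 := by
    have := (Matrix.isUnit_iff_isUnit_det _).1 hΩu
    exact isUnit_iff_ne_zero.1 this
  have hΩ'det : (Omega lam⁻¹ n).det ≠ 0 := by
    have := (Matrix.isUnit_iff_isUnit_det _).1 hΩ'u
    exact isUnit_iff_ne_zero.1 this
  ext g
  simp only [Set.mem_setOf_eq]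
  constructor
  · rintro ⟨hgu, hrev⟩
    have hgdet : IsUnit g.det := (Matrix.isUnit_iff_isUnit_det g).1 hgu
    have hgig : g⁻¹ * g = 1 := Matrix.nonsing_inv_mul g hgdet
    have hgA : g * Matrix.fromBlocks (jordanBlock lam n) 0 0 (jordanBlock lam⁻¹ n) =
        (Matrix.fromBlocks (jordanBlock lam n) 0 0 (jordanBlock lam⁻¹ n))⁻¹ * g := by
      calc g * Matrix.fromBlocks (jordanBlock lam n) 0 0 (jordanBlock lam⁻¹ n)
          = g * Matrix.fromBlocks (jordanBlock lam n) 0 0 (jordanBlock lam⁻¹ n) * (g⁻¹ * g) := by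
            rw [hgig, mul_one]
        _ = (g * Matrix.fromBlocks (jordanBlock lam n) 0 0 (jordanBlock lam⁻¹ n) * g⁻¹) * g := by
            rw [mul_assoc (g * Matrix.fromBlocks (jordanBlock lam n) 0 0 (jordanBlock lam⁻¹ n))]
        _ = _ := by rw [hrev]
    have hAgA : Matrix.fromBlocks (jordanBlock lam n) 0 0 (jordanBlock lam⁻¹ n) * g *
        Matrix.fromBlocks (jordanBlock lam n) 0 0 (jordanBlock lam⁻¹ n) = g := by
      calc Matrix.fromBlocks (jordanBlock lam n) 0 0 (jordanBlock lam⁻¹ n) * g *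
          Matrix.fromBlocks (jordanBlock lam n) 0 0 (jordanBlock lam⁻¹ n)
          = Matrix.fromBlocks (jordanBlock lam n) 0 0 (jordanBlock lam⁻¹ n) *
            (g * Matrix.fromBlocks (jordanBlock lam n) 0 0 (jordanBlock lam⁻¹ n)) := by
            rw [mul_assoc]
        _ = Matrix.fromBlocks (jordanBlock lam n) 0 0 (jordanBlock lam⁻¹ n) *
            ((Matrix.fromBlocks (jordanBlock lam n) 0 0 (jordanBlock lam⁻¹ n))⁻¹ * g) := by
            rw [hgA]
        _ = (Matrix.fromBlocks (jordanBlock lam n) 0 0 (jordanBlock lam⁻¹ n) *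
            (Matrix.fromBlocks (jordanBlock lam n) 0 0 (jordanBlock lam⁻¹ n))⁻¹) * g := by
            rw [mul_assoc]
        _ = g := by rw [hAAi, one_mul]
    obtain ⟨a, b, c, d, hg4⟩ : ∃ a b c d, g = Matrix.fromBlocks a b c d :=
      ⟨g.toBlocks₁₁, g.toBlocks₁₂, g.toBlocks₂₁, g.toBlocks₂₂,
        (Matrix.fromBlocks_toBlocks g).symm⟩
    rw [hg4, Matrix.fromBlocks_multiply, Matrix.fromBlocks_multiply] at hAgA
    simp only [Matrix.zero_mul, Matrix.mul_zero, zero_mul, mul_zero, add_zero, zero_add] at hAgA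
    have h11 : jordanBlock lam n * a * jordanBlock lam n = a := by
      have := congrArg Matrix.toBlocks₁₁ hAgA
      simpa [Matrix.toBlocks_fromBlocks₁₁] using this
    have h12 : jordanBlock lam n * b * jordanBlock lam⁻¹ n = b := by
      have := congrArg Matrix.toBlocks₁₂ hAgA
      simpa [Matrix.toBlocks_fromBlocks₁₂] using this
    have h21 : jordanBlock lam⁻¹ n * c * jordanBlock lam n = c := by
      have := congrArg Matrix.toBlocks₂₁ hAgA
      simpa [Matrix.toBlocks_fromBlocks₂₁] using this
    have h22 : jordanBlock lam⁻¹ n * d * jordanBlock lam⁻¹ n = d := by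
      have := congrArg Matrix.toBlocks₂₂ hAgA
      simpa [Matrix.toBlocks_fromBlocks₂₂] using this
    have ha : a = 0 := jordan_conj_zero hlam0 hsq h11
    have hd : d = 0 := jordan_conj_zero hinv0 hsq' h22
    obtain ⟨x, hx⟩ := conj_block_form hn0 hlam0 h12
    have h21' : jordanBlock lam⁻¹ n * c * jordanBlock (lam⁻¹)⁻¹ n = c := by
      rw [inv_inv]; exact h21
    obtain ⟨y, hy⟩ := conj_block_form hn0 hinv0 h21'
    have hgP : g * Matrix.fromBlocks (0 : Matrix (Fin n) (Fin n) ℂ) 1 1 0 =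
        Matrix.fromBlocks b 0 0 c := by
      rw [hg4, ha, hd, Matrix.fromBlocks_multiply]
      simp
    have hbc : IsUnit (Matrix.fromBlocks b 0 0 c) := by rw [← hgP]; exact hgu.mul hPu
    have hbcdet : IsUnit (b.det * c.det) := by
      have := (Matrix.isUnit_iff_isUnit_det _).1 hbc
      rwa [Matrix.det_fromBlocks_zero₂₁] at this
    have hbdet : b.det ≠ 0 := by
      intro h; rw [h, zero_mul] at hbcdet; simp at hbcdet
    have hcdet : c.det ≠ 0 := by
      intro h; rw [h, mul_zero] at hbcdet; simp at hbcdet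
    have hx0 : x ⟨0, hn⟩ ≠ 0 := by
      intro h
      apply hbdet
      rw [hx, Matrix.det_mul, det_toep hn x, h, zero_pow (by omega), zero_mul]
    have hy0 : y ⟨0, hn⟩ ≠ 0 := by
      intro h
      apply hcdet
      rw [hy, Matrix.det_mul, det_toep hn y, h, zero_pow (by omega), zero_mul]
    exact ⟨x, y, hx0, hy0, by rw [hg4, ha, hd, hx, hy]⟩
  · rintro ⟨x, y, hx0, hy0, hgform⟩
    have hbdet : IsUnit (toep x * Omega lam n).det := by
      rw [Matrix.det_mul, det_toep hn x, isUnit_iff_ne_zero]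
      exact mul_ne_zero (pow_ne_zero _ hx0) hΩdet
    have hcdet : IsUnit (toep y * Omega lam⁻¹ n).det := by
      rw [Matrix.det_mul, det_toep hn y, isUnit_iff_ne_zero]
      exact mul_ne_zero (pow_ne_zero _ hy0) hΩ'det
    have hgu : IsUnit g := by
      have hfact : g = (Matrix.fromBlocks (toep x * Omega lam n) 0 0 (toep y * Omega lam⁻¹ n)) *
          Matrix.fromBlocks (0 : Matrix (Fin n) (Fin n) ℂ) 1 1 0 := by
        rw [hgform, Matrix.fromBlocks_multiply]
        simp
      rw [hfact]
      refine IsUnit.mul ?_ hPu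
      rw [Matrix.isUnit_iff_isUnit_det, Matrix.det_fromBlocks_zero₂₁]
      exact hbdet.mul hcdet
    refine ⟨hgu, ?_⟩
    have e1 : jordanBlock lam n * (toep x * Omega lam n) * jordanBlock lam⁻¹ n =
        toep x * Omega lam n := conj_block_form' hlam0 x
    have e2 := conj_block_form' (μ := lam⁻¹) hinv0 y
    rw [inv_inv] at e2
    have hAgA : Matrix.fromBlocks (jordanBlock lam n) 0 0 (jordanBlock lam⁻¹ n) * g *
        Matrix.fromBlocks (jordanBlock lam n) 0 0 (jordanBlock lam⁻¹ n) = g := by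
      rw [hgform, Matrix.fromBlocks_multiply, Matrix.fromBlocks_multiply]
      simp only [Matrix.zero_mul, Matrix.mul_zero, zero_mul, mul_zero, add_zero, zero_add]
      rw [e1, e2]
    have hgA : g * Matrix.fromBlocks (jordanBlock lam n) 0 0 (jordanBlock lam⁻¹ n) =
        (Matrix.fromBlocks (jordanBlock lam n) 0 0 (jordanBlock lam⁻¹ n))⁻¹ * g := by
      calc g * Matrix.fromBlocks (jordanBlock lam n) 0 0 (jordanBlock lam⁻¹ n)
          = ((Matrix.fromBlocks (jordanBlock lam n) 0 0 (jordanBlock lam⁻¹ n))⁻¹ *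
            Matrix.fromBlocks (jordanBlock lam n) 0 0 (jordanBlock lam⁻¹ n)) *
            (g * Matrix.fromBlocks (jordanBlock lam n) 0 0 (jordanBlock lam⁻¹ n)) := by
            rw [hAiA, one_mul]
        _ = (Matrix.fromBlocks (jordanBlock lam n) 0 0 (jordanBlock lam⁻¹ n))⁻¹ *
            (Matrix.fromBlocks (jordanBlock lam n) 0 0 (jordanBlock lam⁻¹ n) * g *
            Matrix.fromBlocks (jordanBlock lam n) 0 0 (jordanBlock lam⁻¹ n)) := by
            simp only [mul_assoc]
        _ = _ := by rw [hAgA]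
    have hggi : g * g⁻¹ = 1 :=
      Matrix.mul_nonsing_inv g ((Matrix.isUnit_iff_isUnit_det g).1 hgu)
    calc g * Matrix.fromBlocks (jordanBlock lam n) 0 0 (jordanBlock lam⁻¹ n) * g⁻¹
        = ((Matrix.fromBlocks (jordanBlock lam n) 0 0 (jordanBlock lam⁻¹ n))⁻¹ * g) * g⁻¹ := by
          rw [hgA]
      _ = (Matrix.fromBlocks (jordanBlock lam n) 0 0 (jordanBlock lam⁻¹ n))⁻¹ := by
          rw [mul_assoc, hggi, mul_one]
end

section
/- Let μ ∈ {1,−1} and n ≥ 1, and let A = J(μ,n) ∈ SL(n,ℂ). Then A is reversible in SL(n,ℂ) for every n (there exists g ∈ SL(n,ℂ) with gAg⁻¹ = A⁻¹). Moreover, A is strongly reversible in SL(n,ℂ) (a product of two involutions of SL(n,ℂ)) if and only if n ≢ 2 (mod 4). -/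
open Finset Matrix

section Group

variable {G : Type*} [Group G] {a g : G}

theorem conj_eq_inv_of_mul_mul_eq (h : a * g * a = g) : g * a * g⁻¹ = a⁻¹ := by
  rw [mul_inv_eq_iff_eq_mul, eq_inv_mul_iff_mul_eq, ← mul_assoc, h]

theorem exists_involutions_mul_eq_of_mul_mul_eq (hg : g * g = 1) (h : a * g * a = g) :
    ∃ g₁ g₂ : G, g₁ * g₁ = 1 ∧ g₂ * g₂ = 1 ∧ a = g₁ * g₂ :=
  ⟨g, g * a, hg, by rw [mul_assoc, ← mul_assoc a, h, hg], by rw [← mul_assoc, hg, one_mul]⟩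

theorem mul_mul_eq_of_eq_mul_of_mul_self_eq_one {g₁ g₂ : G} (h₁ : g₁ * g₁ = 1)
    (h₂ : g₂ * g₂ = 1) (ha : a = g₁ * g₂) : a * g₁ * a = g₁ := by
  rw [ha]
  simp only [mul_assoc]
  rw [← mul_assoc g₁ g₁ g₂, h₁, one_mul, h₂, mul_one]

end Group

theorem commute_mul_of_mul_mul_eq {M : Type*} [Semigroup M] {a x y : M} (hx : a * x * a = x)
    (hy : a * y * a = y) : Commute a (x * y) := by
  calc a * (x * y) = a * x * (a * y * a) := by rw [hy, mul_assoc]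
    _ = a * x * a * y * a := by simp only [mul_assoc]
    _ = x * y * a := by rw [hx]

theorem Matrix.IsUpperTriangular.mul_apply_self {m R : Type*} [Fintype m] [LinearOrder m]
    [NonUnitalNonAssocSemiring R] {A B : Matrix m m R} (hA : A.IsUpperTriangular)
    (hB : B.IsUpperTriangular) (i : m) : (A * B) i i = A i i * B i i := by
  rw [mul_apply]
  refine sum_eq_single i (fun l _ hli => ?_) (by simp)
  rcases lt_or_gt_of_ne hli with hl | hl
  · rw [hA hl, zero_mul]
  · rw [hB hl, mul_zero]

theorem Int.alternating_sum_range_choose_mul_choose (i j : ℕ) :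
    ∑ k ∈ Finset.range (j + 1), (-1 : ℤ) ^ k * j.choose k * k.choose i
      = if i = j then (-1) ^ i else 0 := by
  rcases lt_or_ge j i with hji | hij
  · rw [if_neg hji.ne']
    refine sum_eq_zero fun k hk => ?_
    rw [Nat.choose_eq_zero_of_lt (show k < i by grind), Nat.cast_zero, mul_zero]
  obtain ⟨d, rfl⟩ := Nat.exists_eq_add_of_le hij
  have hlow : ∑ k ∈ Finset.range i, (-1 : ℤ) ^ k * (i + d).choose k * k.choose i = 0 :=
    sum_eq_zero fun k hk => by
      rw [Nat.choose_eq_zero_of_lt (mem_range.1 hk), Nat.cast_zero, mul_zero]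
  have hterm (t : ℕ) : (-1 : ℤ) ^ (i + t) * (i + d).choose (i + t) * (i + t).choose i
      = (-1) ^ i * (i + d).choose i * ((-1) ^ t * d.choose t) := by
    have := Nat.choose_mul (n := i + d) (Nat.le_add_right i t)
    simp only [Nat.add_sub_cancel_left] at this
    rw [pow_add, mul_assoc _ (((i + d).choose (i + t) : ℕ) : ℤ), ← Nat.cast_mul, this]
    push_cast; ring
  rw [add_assoc, sum_range_add, hlow, zero_add]
  simp only [hterm, ← mul_sum, Int.alternating_sum_range_choose]
  rcases d with _ | d <;> simp

theorem Nat.even_choose_two_iff (n : ℕ) : Even (n.choose 2) ↔ n % 4 = 0 ∨ n % 4 = 1 := by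
  induction n with
  | zero => simp
  | succ n ih =>
    rw [Nat.choose_succ_succ, Nat.choose_one_right, Nat.even_add, ih, Nat.even_iff]
    omega

theorem jordanBlock_eq_smul_one_add (mu : ℂ) (n : ℕ) :
    jordanBlock mu n = mu • 1 + jordanBlock 0 n := by
  ext i j
  by_cases h : i = j
  · subst h; simp [jordanBlock]
  · simp [jordanBlock, one_apply_ne h, Fin.val_ne_of_ne (Ne.symm h)]

theorem jordanBlock_zero_apply {n : ℕ} (i j : Fin n) :
    jordanBlock 0 n i j = if (j : ℕ) = i + 1 then 1 else 0 := by
  simp only [jordanBlock, of_apply]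
  split_ifs <;> first | rfl | omega

section Shift

variable {m : ℕ} (M : Matrix (Fin (m + 1)) (Fin (m + 1)) ℂ)

theorem jordanBlock_zero_mul_apply_castSucc (i : Fin m) (j : Fin (m + 1)) :
    (jordanBlock 0 (m + 1) * M) i.castSucc j = M i.succ j := by
  rw [mul_apply, sum_eq_single i.succ]
  · simp [jordanBlock_zero_apply]
  · intro l _ hl
    rw [jordanBlock_zero_apply, if_neg (fun h => hl (Fin.ext (by simpa using h))), zero_mul]
  · simp

theorem jordanBlock_zero_mul_apply_last (j : Fin (m + 1)) :
    (jordanBlock 0 (m + 1) * M) (Fin.last m) j = 0 :=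
  (mul_apply ..).trans <| sum_eq_zero fun l _ => by
    rw [jordanBlock_zero_apply, if_neg (by simp; omega), zero_mul]

theorem mul_jordanBlock_zero_apply_succ (i : Fin (m + 1)) (j : Fin m) :
    (M * jordanBlock 0 (m + 1)) i j.succ = M i j.castSucc := by
  rw [mul_apply, sum_eq_single j.castSucc]
  · simp [jordanBlock_zero_apply]
  · intro l _ hl
    rw [jordanBlock_zero_apply, if_neg (fun h => hl (Fin.ext (by simp at h ⊢; omega))), mul_zero]
  · simp

theorem mul_jordanBlock_zero_apply_zero (i : Fin (m + 1)) :
    (M * jordanBlock 0 (m + 1)) i 0 = 0 :=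
  (mul_apply ..).trans <| sum_eq_zero fun l _ => by
    rw [jordanBlock_zero_apply, if_neg (by simp), mul_zero]

end Shift

section Centralizer

variable {m : ℕ} {k : Matrix (Fin (m + 1)) (Fin (m + 1)) ℂ}

theorem apply_castSucc_of_commute_jordanBlock_zero (hk : Commute (jordanBlock 0 (m + 1)) k)
    (i j : Fin m) :
    k i.castSucc j.castSucc = k i.succ j.succ := by
  rw [← mul_jordanBlock_zero_apply_succ k, ← jordanBlock_zero_mul_apply_castSucc k, hk.eq]

theorem apply_last_castSucc_of_commute_jordanBlock_zero (hk : Commute (jordanBlock 0 (m + 1)) k)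
    (j : Fin m) :
    k (Fin.last m) j.castSucc = 0 := by
  rw [← mul_jordanBlock_zero_apply_succ k, ← hk.eq, jordanBlock_zero_mul_apply_last]

theorem isUpperTriangular_of_commute_jordanBlock_zero (hk : Commute (jordanBlock 0 (m + 1)) k) :
    k.IsUpperTriangular := by
  intro i
  induction i using Fin.reverseInduction with
  | last =>
    intro j hj
    obtain ⟨j, rfl⟩ := Fin.exists_castSucc_eq.2 (Fin.ne_last_of_lt hj)
    exact apply_last_castSucc_of_commute_jordanBlock_zero hk j
  | cast i ih =>
    intro j hj
    obtain ⟨j, rfl⟩ :=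
      Fin.exists_castSucc_eq.2 (Fin.ne_last_of_lt (hj.trans (Fin.castSucc_lt_last i)))
    rw [apply_castSucc_of_commute_jordanBlock_zero hk]
    exact ih (by simpa using hj)

theorem apply_self_of_commute_jordanBlock_zero (hk : Commute (jordanBlock 0 (m + 1)) k)
    (i : Fin (m + 1)) : k i i = k 0 0 := by
  induction i using Fin.induction with
  | zero => rfl
  | succ i ih => rw [← apply_castSucc_of_commute_jordanBlock_zero hk, ih]

end Centralizer

/-- The matrix of `p(X) ↦ p(-X - μ)` on polynomials of degree `< n` in the monomial basis
(when `μ² = 1`), which explains why it is an involution. -/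
noncomputable def jordanReverser (mu : ℂ) (n : ℕ) : Matrix (Fin n) (Fin n) ℂ :=
  of fun i j => (-1) ^ (j : ℕ) * mu ^ ((i : ℕ) + j) * (j : ℕ).choose i

section Reverser

variable {mu : ℂ}

theorem jordanReverser_isUpperTriangular (mu : ℂ) (n : ℕ) :
    (jordanReverser mu n).IsUpperTriangular := fun i j hji => by
  simp only [jordanReverser, of_apply, Nat.choose_eq_zero_of_lt (show (j : ℕ) < i from hji),
    Nat.cast_zero, mul_zero]

theorem pow_add_mul_pow_add_of_sq_eq_one (h : mu ^ 2 = 1) (i j k : ℕ) :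
    mu ^ (i + k) * mu ^ (k + j) = mu ^ (i + j) := by
  rw [← pow_add, show i + k + (k + j) = i + j + 2 * k by ring, pow_add, pow_mul, h, one_pow,
    mul_one]

theorem jordanReverser_apply_self (h : mu ^ 2 = 1) {n : ℕ} (i : Fin n) :
    jordanReverser mu n i i = (-1) ^ (i : ℕ) := by
  simp [jordanReverser, ← two_mul, pow_mul, h]

theorem det_jordanReverser (h : mu ^ 2 = 1) (n : ℕ) :
    (jordanReverser mu n).det = (-1) ^ n.choose 2 := by
  rw [det_of_isUpperTriangular (jordanReverser_isUpperTriangular mu n)]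
  simp only [jordanReverser_apply_self h, prod_pow_eq_pow_sum,
    Fin.sum_univ_eq_sum_range (fun i => i), sum_range_id, Nat.choose_two_right]

theorem jordanReverser_mul_self (h : mu ^ 2 = 1) (n : ℕ) :
    jordanReverser mu n * jordanReverser mu n = 1 := by
  ext i j
  have hterm (k : ℕ) : (-1) ^ k * mu ^ ((i : ℕ) + k) * (k.choose i : ℂ) *
      ((-1) ^ (j : ℕ) * mu ^ (k + j) * ((j : ℕ).choose k : ℂ))
      = (-1) ^ (j : ℕ) * mu ^ ((i : ℕ) + j) *
        ((-1) ^ k * (j : ℕ).choose k * k.choose i : ℤ) := by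
    push_cast
    linear_combination (-1) ^ (j : ℕ) * (-1) ^ k * ((j : ℕ).choose k : ℂ) * (k.choose i : ℂ) *
      pow_add_mul_pow_add_of_sq_eq_one h i j k
  have hsum : ∑ k ∈ range n, ((-1) ^ k * (j : ℕ).choose k * k.choose i : ℤ)
      = ∑ k ∈ range (j + 1), ((-1) ^ k * (j : ℕ).choose k * k.choose i : ℤ) :=
    (sum_subset (range_subset_range.2 j.isLt) fun k _ hk => by
      rw [Nat.choose_eq_zero_of_lt (by simpa using hk)]; simp).symm
  rw [mul_apply]
  simp only [jordanReverser, of_apply, hterm, ← mul_sum]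
  rw [Fin.sum_univ_eq_sum_range (fun k => (((-1) ^ k * (j : ℕ).choose k * k.choose i : ℤ) : ℂ)),
    ← Int.cast_sum, hsum, Int.alternating_sum_range_choose_mul_choose]
  by_cases hij : i = j
  · subst hij
    rw [if_pos rfl, one_apply_eq, Int.cast_pow, Int.cast_neg, Int.cast_one, mul_right_comm,
      ← mul_pow, ← two_mul, pow_mul, h]
    norm_num
  · simp [hij, Fin.val_ne_of_ne hij]

theorem jordanBlock_mul_jordanReverser_mul_jordanBlock (h : mu ^ 2 = 1) (m : ℕ) :
    jordanBlock mu (m + 1) * jordanReverser mu (m + 1) * jordanBlock mu (m + 1)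
      = jordanReverser mu (m + 1) := by
  have hG := jordanReverser_isUpperTriangular mu (m + 1)
  suffices hcross : ∀ i j, mu * ((jordanBlock 0 (m + 1) * jordanReverser mu (m + 1)) i j
      + (jordanReverser mu (m + 1) * jordanBlock 0 (m + 1)) i j)
      + (jordanBlock 0 (m + 1) * jordanReverser mu (m + 1) * jordanBlock 0 (m + 1)) i j = 0 by
    ext i j
    rw [jordanBlock_eq_smul_one_add]
    simp only [add_mul, mul_add, smul_mul_assoc, mul_smul_comm, one_mul, mul_one,
      Matrix.add_apply, Matrix.smul_apply, smul_eq_mul]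
    linear_combination jordanReverser mu (m + 1) i j * h + hcross i j
  intro i j
  cases j using Fin.cases with
  | zero =>
    simp only [mul_jordanBlock_zero_apply_zero, add_zero]
    cases i using Fin.lastCases with
    | last => rw [jordanBlock_zero_mul_apply_last, mul_zero]
    | cast i =>
      rw [jordanBlock_zero_mul_apply_castSucc, @hG i.succ 0 (Fin.succ_pos i), mul_zero]
  | succ j =>
    simp only [mul_jordanBlock_zero_apply_succ]
    cases i using Fin.lastCases with
    | last =>
      rw [jordanBlock_zero_mul_apply_last, jordanBlock_zero_mul_apply_last,
        @hG (Fin.last m) j.castSucc (Fin.castSucc_lt_last j)]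
      ring
    | cast i =>
      simp only [jordanBlock_zero_mul_apply_castSucc, jordanReverser, of_apply, Fin.val_succ,
        Fin.val_castSucc, Nat.choose_succ_succ, Nat.cast_add]
      linear_combination -(-1) ^ (j : ℕ) * mu ^ ((i : ℕ) + j + 1) *
        (((j : ℕ).choose i : ℂ) + (j : ℕ).choose (i + 1)) * h

theorem det_eq_det_jordanReverser_of_reverses (h : mu ^ 2 = 1) {m : ℕ} (hm : Even (m + 1))
    {g : Matrix (Fin (m + 1)) (Fin (m + 1)) ℂ} (hg : g * g = 1)
    (hJ : jordanBlock mu (m + 1) * g * jordanBlock mu (m + 1) = g) :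
    g.det = (jordanReverser mu (m + 1)).det := by
  have hG := jordanReverser_isUpperTriangular mu (m + 1)
  obtain ⟨k, hk_def⟩ : ∃ k, k = jordanReverser mu (m + 1) * g := ⟨_, rfl⟩
  have hgk : g = jordanReverser mu (m + 1) * k := by
    rw [hk_def, ← mul_assoc, jordanReverser_mul_self h, one_mul]
  have hkJ : Commute (jordanBlock mu (m + 1)) k :=
    hk_def ▸ commute_mul_of_mul_mul_eq (jordanBlock_mul_jordanReverser_mul_jordanBlock h m) hJ
  have hkN : Commute (jordanBlock 0 (m + 1)) k := by
    have := hkJ.sub_left ((Commute.one_left k).smul_left mu)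
    rwa [jordanBlock_eq_smul_one_add, add_sub_cancel_left] at this
  have hk := isUpperTriangular_of_commute_jordanBlock_zero hkN
  have hk00 : k 0 0 = 1 ∨ k 0 0 = -1 := by
    have := congrFun (congrFun hg 0) 0
    rw [hgk, IsUpperTriangular.mul_apply_self (hG.mul hk) (hG.mul hk), hG.mul_apply_self hk,
      jordanReverser_apply_self h] at this
    simpa [← sq] using this
  have hkn : k 0 0 ^ (m + 1) = 1 := by rcases hk00 with h1 | h1 <;> simp [h1, hm.neg_one_pow]
  rw [hgk, det_mul, det_of_isUpperTriangular hk,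
    prod_congr rfl fun i _ => apply_self_of_commute_jordanBlock_zero hkN i,
    prod_const, card_univ, Fintype.card_fin, hkn, mul_one]

theorem exists_det_smul_jordanReverser_eq_one (h : mu ^ 2 = 1) {n : ℕ} (hn : 0 < n) :
    ∃ c : ℂ, (c • jordanReverser mu n).det = 1 := by
  obtain ⟨c, hc⟩ := IsAlgClosed.exists_pow_nat_eq (jordanReverser mu n).det hn
  refine ⟨c, ?_⟩
  rw [det_smul, Fintype.card_fin, hc, det_jordanReverser h, ← mul_pow, neg_one_mul, neg_neg,
    one_pow]

theorem exists_involutive_smul_jordanReverser (h : mu ^ 2 = 1) {n : ℕ} (hn : n % 4 ≠ 2) :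
    ∃ s : ℂ, s • jordanReverser mu n * s • jordanReverser mu n = 1 ∧
      (s • jordanReverser mu n).det = 1 := by
  obtain ⟨s, hs, hsn⟩ : ∃ s : ℂ, s * s = 1 ∧ s ^ n * (-1) ^ n.choose 2 = 1 := by
    by_cases he : Even (n.choose 2)
    · exact ⟨1, one_mul 1, by rw [one_pow, he.neg_one_pow, one_mul]⟩
    · have hodd : Odd n := Nat.odd_iff.2 (by have := (Nat.even_choose_two_iff n).not.1 he; omega)
      exact ⟨-1, by norm_num, by
        rw [hodd.neg_one_pow, (Nat.not_even_iff_odd.1 he).neg_one_pow]; norm_num⟩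
  exact ⟨s, by rw [smul_mul_smul_comm, hs, jordanReverser_mul_self h, one_smul],
    by rw [det_smul, Fintype.card_fin, det_jordanReverser h, hsn]⟩

end Reverser

/-- For `μ ∈ {1, -1}` with `A = J(μ, n) ∈ SL(n, ℂ)`: `A` is always reversible in `SL(n, ℂ)`,
and `A` is strongly reversible in `SL(n, ℂ)` iff `n ≢ 2 (mod 4)`. -/
theorem jordanBlock_reversible_and_strongly_reversible_iff {n : ℕ} (hn : 1 ≤ n)
    (mu : ℂ) (hmu : mu = 1 ∨ mu = -1)
    (hdet : (jordanBlock mu n).det = 1)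
    (A : Matrix.SpecialLinearGroup (Fin n) ℂ) (hA : A = ⟨jordanBlock mu n, hdet⟩) :
    (∃ g : Matrix.SpecialLinearGroup (Fin n) ℂ, g * A * g⁻¹ = A⁻¹) ∧
    ((∃ g₁ g₂ : Matrix.SpecialLinearGroup (Fin n) ℂ,
        g₁ * g₁ = 1 ∧ g₂ * g₂ = 1 ∧ A = g₁ * g₂) ↔ n % 4 ≠ 2) := by
  subst hA
  obtain ⟨m, rfl⟩ : ∃ m, n = m + 1 := ⟨n - 1, by omega⟩
  have h2 : mu ^ 2 = 1 := by rcases hmu with rfl | rfl <;> norm_num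
  have reverses (c : ℂ) (hc : (c • jordanReverser mu (m + 1)).det = 1) :
      (⟨jordanBlock mu (m + 1), hdet⟩ * ⟨_, hc⟩ * ⟨jordanBlock mu (m + 1), hdet⟩ :
        SpecialLinearGroup (Fin (m + 1)) ℂ) = ⟨_, hc⟩ :=
    Subtype.ext <| show _ * _ * _ = _ by
      rw [Matrix.mul_smul, Matrix.smul_mul, jordanBlock_mul_jordanReverser_mul_jordanBlock h2]
  refine ⟨?_, fun ⟨g₁, g₂, h₁, h₂, ha⟩ hm => ?_, fun hm => ?_⟩
  · obtain ⟨c, hc⟩ := exists_det_smul_jordanReverser_eq_one h2 m.succ_pos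
    exact ⟨_, conj_eq_inv_of_mul_mul_eq (reverses c hc)⟩
  · have hrev := congrArg Subtype.val
      (mul_mul_eq_of_eq_mul_of_mul_self_eq_one (G := SpecialLinearGroup (Fin (m + 1)) ℂ) h₁ h₂ ha)
    have hdet₁ := det_eq_det_jordanReverser_of_reverses h2 (Nat.even_iff.2 (by omega))
      (congrArg Subtype.val h₁) hrev
    rw [g₁.2, det_jordanReverser h2, Odd.neg_one_pow] at hdet₁
    · norm_num at hdet₁
    · exact Nat.not_even_iff_odd.1 ((Nat.even_choose_two_iff _).not.2 (by omega))
  · obtain ⟨s, hs, hsdet⟩ := exists_involutive_smul_jordanReverser h2 hm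
    exact exists_involutions_mul_eq_of_mul_mul_eq (Subtype.ext hs) (reverses s hsdet)
end
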